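/- Cost-table form of the encoded couplings: consider N registers with register i consisting of D_i spins, total n = ∑_i D_i spins, and for each register i an injective assignment c ↦ s^{(i,c)} ∈ {−1,+1}^{D_i} of choices c ∈ {1,…,m_i} (m_i ≤ 2^{D_i}) to sign vectors. Let x_{i,c}(z_i) = 2^{−D_i} ∏_q (1 + s^{(i,c)}_q z_{i,q}), let α_i : {1,…,m_i} → ℝ and β_{i,j} : {1,…,m_i}×{1,…,m_j} → ℝ with ∑_{c_j} β_{i,j}(c_i,c_j) = 0 for all c_i and ∑_{c_i} β_{i,j}(c_i,c_j) = 0 for all c_j, and define f(z) = ∑_i ∑_{c} α_i(c) x_{i,c}(z_i) + ∑_{i<j} ∑_{c_i,c_j} β_{i,j}(c_i,c_j) x_{i,c_i}(z_i) x_{j,c_j}(z_j). Then for every nonempty S ⊆ [n]: (1) if S ⊆ register i, the Walsh coefficient of f at S equals 2^{−D_i} ∑_c α_i(c) ∏_{q∈S} s^{(i,c)}_q; (2) if S = T_i ⊔ T_j with T_i, T_j nonempty subsets of registers i and j respectively, it equals 2^{−(D_i+D_j)} ∑_{c_i,c_j} β_{i,j}(c_i,c_j) (∏_{q∈T_i}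 s^{(i,c_i)}_q)(∏_{q∈T_j} s^{(j,c_j)}_q); (3) if S intersects three or more registers, it equals 0. -/

import Mathlib

open Finset

/-- The Ising point of the hypercube `{−1,+1}^ι` corresponding to a bit vector. -/
noncomputable def toSign {ι : Type*} (b : ι → Bool) : ι → ℝ :=
  fun q => if b q then 1 else -1

/-- The Walsh coefficient `f̂(T) = E_z[f(z) χ_T(z)]` under the uniform measure on the
hypercube `{−1,+1}^ι`. -/
noncomputable def walshCoeff {ι : Type*} [Fintype ι] [DecidableEq ι]
    (f : (ι → ℝ) → ℝ) (T : Finset ι) : ℝ :=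
  ((2 : ℝ) ^ Fintype.card ι)⁻¹ * ∑ b : ι → Bool, f (toSign b) * ∏ q ∈ T, toSign b q

/-- The indicator polynomial `x_{i,c}(z_i) = 2^{−D_i} ∏_q (1 + s^{(i,c)}_q z_{i,q})` of
choice `c` of register `i`. -/
noncomputable def indicatorPoly {N : ℕ} (D m : Fin N → ℕ)
    (s : ∀ i, Fin (m i) → Fin (D i) → ℝ) (i : Fin N) (c : Fin (m i))
    (z : ((i : Fin N) × Fin (D i)) → ℝ) : ℝ :=
  ((2 : ℝ) ^ D i)⁻¹ * ∏ q : Fin (D i), (1 + s i c q * z ⟨i, q⟩)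

/-- The exact-binary encoded pairwise cost function
`f(z) = ∑_i ∑_c α_i(c) x_{i,c}(z_i) + ∑_{i<j} ∑_{c_i,c_j} β_{i,j}(c_i,c_j) x_{i,c_i}(z_i) x_{j,c_j}(z_j)`. -/
noncomputable def encodedF {N : ℕ} (D m : Fin N → ℕ)
    (s : ∀ i, Fin (m i) → Fin (D i) → ℝ)
    (α : ∀ i, Fin (m i) → ℝ) (β : ∀ i j, Fin (m i) → Fin (m j) → ℝ)
    (z : ((i : Fin N) × Fin (D i)) → ℝ) : ℝ :=
  (∑ i : Fin N, ∑ c : Fin (m i), α i c * indicatorPoly D m s i c z) +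
    ∑ i : Fin N, ∑ j : Fin N,
      if i < j then
        ∑ ci : Fin (m i), ∑ cj : Fin (m j),
          β i j ci cj * indicatorPoly D m s i ci z * indicatorPoly D m s j cj z
      else 0

/-!
Each indicator is `x_{i,c} = 2^{-D_i} ∏_q (1 + s_q z_{i,q}) = 2^{-D_i} ∑_{U ⊆ register i} s^U χ_U`,
and a product `x_{i,c_i} x_{j,c_j}` over two registers expands likewise into characters
`χ_{U ⊔ V}`. By orthogonality of characters, the coefficient of `f` at `S` collects the
one-register terms with `S` inside register `i` and the two-register terms with `S` inside
registers `i ∪ j`. In a two-register term whose character misses register `i` (or `j`), the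
`β`-sum runs over a full row (or column) of the centered table and vanishes. So only sets `S`
meeting exactly the registers `{i, j}` see `β_{i,j}`, and no term reaches a set meeting three
registers.
-/

section RegisterPart

variable {ι : Type*} {κ : ι → Type*}

noncomputable def registerPart (i : ι) (S : Finset (Σ i, κ i)) : Finset (κ i) :=
  S.preimage (Sigma.mk i) sigma_mk_injective.injOn

@[simp]
lemma mem_registerPart {i : ι} {S : Finset (Σ i, κ i)} {q : κ i} :
    q ∈ registerPart i S ↔ ⟨i, q⟩ ∈ S :=
  mem_preimage

lemma eq_iff_forall_registerPart_eq {S S' : Finset (Σ i, κ i)} :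
    S = S' ↔ ∀ a, registerPart a S = registerPart a S' := by
  refine ⟨fun h a => h ▸ rfl, fun h => ?_⟩
  ext ⟨a, q⟩
  simpa using congrArg (q ∈ ·) (h a)

variable [DecidableEq ι]

lemma registerPart_eq_empty_iff {i : ι} {S : Finset (Σ i, κ i)} :
    registerPart i S = ∅ ↔ i ∉ S.image Sigma.fst := by
  simp [eq_empty_iff_forall_notMem]

lemma image_fst_subset_iff {A : Finset ι} {S : Finset (Σ i, κ i)} :
    S.image Sigma.fst ⊆ A ↔ ∀ a ∉ A, registerPart a S = ∅ := by
  simp only [registerPart_eq_empty_iff]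
  exact ⟨fun h a ha hS => ha (h hS), fun h a hS => by_contra fun ha => h a ha hS⟩

variable [∀ i, DecidableEq (κ i)]

lemma registerPart_union {i : ι} {S S' : Finset (Σ i, κ i)} :
    registerPart i (S ∪ S') = registerPart i S ∪ registerPart i S' :=
  preimage_union _

@[simp]
lemma registerPart_image_mk_self {i : ι} {U : Finset (κ i)} :
    registerPart i (U.image (Sigma.mk i)) = U := by
  ext q; simp

lemma registerPart_image_mk_of_ne {a i : ι} (h : a ≠ i) {U : Finset (κ i)} :
    registerPart a (U.image (Sigma.mk i)) = ∅ := by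
  rw [registerPart_eq_empty_iff, image_image]
  simp [Function.comp_def, Ne.symm h]

lemma disjoint_image_mk {i j : ι} (hij : i ≠ j) (U : Finset (κ i)) (V : Finset (κ j)) :
    Disjoint (U.image (Sigma.mk i)) (V.image (Sigma.mk j)) := by
  rw [disjoint_left]
  intro p hU hV
  obtain ⟨u, -, rfl⟩ := mem_image.mp hU
  obtain ⟨v, -, h⟩ := mem_image.mp hV
  exact hij (congrArg Sigma.fst h).symm

lemma image_fst_image_mk {i : ι} {U : Finset (κ i)} (hU : U.Nonempty) :
    (U.image (Sigma.mk i)).image Sigma.fst = {i} := by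
  rw [image_image]
  exact image_const hU i

lemma image_mk_eq_iff {i : ι} {U : Finset (κ i)} {S : Finset (Σ i, κ i)} :
    U.image (Sigma.mk i) = S ↔ S.image Sigma.fst ⊆ {i} ∧ U = registerPart i S := by
  rw [eq_iff_forall_registerPart_eq, image_fst_subset_iff]
  constructor
  · intro h
    refine ⟨fun a ha => ?_, registerPart_image_mk_self.symm.trans (h i)⟩
    rw [← h a, registerPart_image_mk_of_ne (mem_singleton.not.mp ha)]
  · rintro ⟨hS, rfl⟩ a
    by_cases ha : a = i
    · subst ha; simp
    · rw [registerPart_image_mk_of_ne ha, hS a (mem_singleton.not.mpr ha)]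

lemma image_mk_union_image_mk_eq_iff {i j : ι} (hij : i ≠ j) {U : Finset (κ i)}
    {V : Finset (κ j)} {S : Finset (Σ i, κ i)} :
    U.image (Sigma.mk i) ∪ V.image (Sigma.mk j) = S ↔
      S.image Sigma.fst ⊆ {i, j} ∧ U = registerPart i S ∧ V = registerPart j S := by
  rw [eq_iff_forall_registerPart_eq, image_fst_subset_iff]
  simp only [registerPart_union]
  constructor
  · intro h
    refine ⟨fun a ha => ?_, ?_, ?_⟩
    · simp only [mem_insert, mem_singleton, not_or] at ha
      rw [← h a, registerPart_image_mk_of_ne ha.1, registerPart_image_mk_of_ne ha.2, union_empty]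
    · rw [← h i, registerPart_image_mk_self, registerPart_image_mk_of_ne hij, union_empty]
    · rw [← h j, registerPart_image_mk_self, registerPart_image_mk_of_ne hij.symm, empty_union]
  · rintro ⟨hS, rfl, rfl⟩ a
    by_cases hai : a = i
    · subst hai
      rw [registerPart_image_mk_self, registerPart_image_mk_of_ne hij, union_empty]
    by_cases haj : a = j
    · subst haj
      rw [registerPart_image_mk_self, registerPart_image_mk_of_ne hai, empty_union]
    rw [registerPart_image_mk_of_ne hai, registerPart_image_mk_of_ne haj, union_empty,
      hS a (by simp [hai, haj])]

end RegisterPart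

section Walsh

variable {ι : Type*} [Fintype ι] [DecidableEq ι]

lemma sum_prod_toSign_mul_prod_toSign (A B : Finset ι) :
    ∑ b : ι → Bool, (∏ q ∈ A, toSign b q) * ∏ q ∈ B, toSign b q =
      if A = B then 2 ^ Fintype.card ι else 0 := by
  let σ : Bool → ℝ := fun v => if v then 1 else -1
  let g : ι → Bool → ℝ := fun q v => (if q ∈ A then σ v else 1) * (if q ∈ B then σ v else 1)
  have hsummand : ∀ b : ι → Bool,
      (∏ q ∈ A, toSign b q) * ∏ q ∈ B, toSign b q = ∏ q, g q (b q) := by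
    intro b
    rw [show ∏ q, g q (b q) = (∏ q, if q ∈ A then σ (b q) else 1) *
        ∏ q, if q ∈ B then σ (b q) else 1 from prod_mul_distrib,
      prod_ite_mem, prod_ite_mem, univ_inter, univ_inter]
    rfl
  have hfactor : ∀ q, ∑ v, g q v = if (q ∈ A ↔ q ∈ B) then 2 else 0 := by
    intro q
    by_cases hA : q ∈ A <;> by_cases hB : q ∈ B <;> simp [g, σ, hA, hB, one_add_one_eq_two]
  rw [sum_congr rfl fun b _ => hsummand b, ← Fintype.prod_sum g,
    prod_congr rfl fun q _ => hfactor q]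
  split_ifs with h
  · simp [h]
  · obtain ⟨q, hq⟩ : ∃ q, ¬(q ∈ A ↔ q ∈ B) := by
      by_contra! hc
      exact h (ext hc)
    exact prod_eq_zero (mem_univ q) (if_neg hq)

lemma walshCoeff_monomial (A S : Finset ι) :
    walshCoeff (fun z => ∏ p ∈ A, z p) S = if A = S then 1 else 0 := by
  rw [walshCoeff, sum_prod_toSign_mul_prod_toSign]
  split_ifs <;> simp

lemma walshCoeff_add (f g : (ι → ℝ) → ℝ) (S : Finset ι) :
    walshCoeff (fun z => f z + g z) S = walshCoeff f S + walshCoeff g S := by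
  simp only [walshCoeff, add_mul, sum_add_distrib, mul_add]

lemma walshCoeff_sum {κ : Type*} (t : Finset κ) (f : κ → (ι → ℝ) → ℝ) (S : Finset ι) :
    walshCoeff (fun z => ∑ k ∈ t, f k z) S = ∑ k ∈ t, walshCoeff (f k) S := by
  simp only [walshCoeff, sum_mul]
  rw [sum_comm, mul_sum]

lemma walshCoeff_const_mul (a : ℝ) (f : (ι → ℝ) → ℝ) (S : Finset ι) :
    walshCoeff (fun z => a * f z) S = a * walshCoeff f S := by
  simp only [walshCoeff, mul_assoc, ← mul_sum]
  ring

lemma walshCoeff_ite (P : Prop) [Decidable P] (f : (ι → ℝ) → ℝ) (S : Finset ι) :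
    walshCoeff (fun z => if P then f z else 0) S = if P then walshCoeff f S else 0 := by
  split_ifs <;> simp [walshCoeff]

lemma walshCoeff_sum_mul_monomial {κ : Type*} (t : Finset κ) (a : κ → ℝ) (A : κ → Finset ι)
    (S : Finset ι) :
    walshCoeff (fun z => ∑ k ∈ t, a k * ∏ p ∈ A k, z p) S =
      ∑ k ∈ t, if A k = S then a k else 0 := by
  simp only [walshCoeff_sum, walshCoeff_const_mul, walshCoeff_monomial, mul_ite, mul_one,
    mul_zero]

end Walsh

section RegisterProduct

variable {ι : Type*} [DecidableEq ι] {κ : ι → Type*} [∀ i, Fintype (κ i)]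
  [∀ i, DecidableEq (κ i)]

lemma prod_one_add_mul_eq_sum (i : ι) (a : κ i → ℝ) (z : (Σ i, κ i) → ℝ) :
    ∏ q, (1 + a q * z ⟨i, q⟩) =
      ∑ U : Finset (κ i), (∏ q ∈ U, a q) * ∏ p ∈ U.image (Sigma.mk i), z p := by
  rw [prod_one_add, powerset_univ]
  refine sum_congr rfl fun U _ => ?_
  rw [prod_mul_distrib, prod_image sigma_mk_injective.injOn]

variable [Fintype ι]

lemma walshCoeff_prod_one_add_mul (i : ι) (a : κ i → ℝ) (S : Finset (Σ i, κ i)) :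
    walshCoeff (fun z => ∏ q, (1 + a q * z ⟨i, q⟩)) S =
      if S.image Sigma.fst ⊆ {i} then ∏ q ∈ registerPart i S, a q else 0 := by
  simp only [prod_one_add_mul_eq_sum, walshCoeff_sum_mul_monomial, image_mk_eq_iff, ite_and]
  split_ifs <;> simp

lemma walshCoeff_prod_one_add_mul_mul_prod_one_add_mul {i j : ι} (hij : i ≠ j)
    (a : κ i → ℝ) (b : κ j → ℝ) (S : Finset (Σ i, κ i)) :
    walshCoeff (fun z => (∏ q, (1 + a q * z ⟨i, q⟩)) * ∏ q, (1 + b q * z ⟨j, q⟩)) S =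
      if S.image Sigma.fst ⊆ {i, j} then
        (∏ q ∈ registerPart i S, a q) * ∏ q ∈ registerPart j S, b q
      else 0 := by
  have hexpand : ∀ z : (Σ i, κ i) → ℝ,
      (∏ q, (1 + a q * z ⟨i, q⟩)) * ∏ q, (1 + b q * z ⟨j, q⟩) =
        ∑ UV : Finset (κ i) × Finset (κ j), ((∏ q ∈ UV.1, a q) * ∏ q ∈ UV.2, b q) *
          ∏ p ∈ UV.1.image (Sigma.mk i) ∪ UV.2.image (Sigma.mk j), z p := by
    intro z
    rw [prod_one_add_mul_eq_sum, prod_one_add_mul_eq_sum, sum_mul_sum, Fintype.sum_prod_type]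
    refine sum_congr rfl fun U _ => sum_congr rfl fun V _ => ?_
    rw [prod_union (disjoint_image_mk hij U V)]
    ring
  simp only [hexpand, walshCoeff_sum_mul_monomial, image_mk_union_image_mk_eq_iff hij, ite_and]
  split_ifs <;> simp [Fintype.sum_prod_type]

end RegisterProduct

lemma sum_sum_mul_prod_mul_prod_eq_zero {κ₁ κ₂ α₁ α₂ : Type*} [Fintype κ₁] [Fintype κ₂]
    {B : κ₁ → κ₂ → ℝ} (hrow : ∀ c₁, ∑ c₂, B c₁ c₂ = 0) (hcol : ∀ c₂, ∑ c₁, B c₁ c₂ = 0)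
    (x : κ₁ → α₁ → ℝ) (y : κ₂ → α₂ → ℝ) {U : Finset α₁} {V : Finset α₂} (h : U = ∅ ∨ V = ∅) :
    ∑ c₁, ∑ c₂, B c₁ c₂ * (∏ q ∈ U, x c₁ q) * ∏ q ∈ V, y c₂ q = 0 := by
  rcases h with rfl | rfl
  · rw [sum_comm]
    simp [← sum_mul, hcol]
  · simp [← sum_mul, hrow]

section EncodedF

variable {N : ℕ} (D m : Fin N → ℕ) (s : ∀ i, Fin (m i) → Fin (D i) → ℝ)

lemma walshCoeff_indicatorPoly (i : Fin N) (c : Fin (m i))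
    (S : Finset ((i : Fin N) × Fin (D i))) :
    walshCoeff (indicatorPoly D m s i c) S =
      if S.image Sigma.fst ⊆ {i} then
        ((2 : ℝ) ^ D i)⁻¹ * ∏ q ∈ registerPart i S, s i c q
      else 0 := by
  unfold indicatorPoly
  rw [walshCoeff_const_mul, walshCoeff_prod_one_add_mul, mul_ite, mul_zero]

lemma walshCoeff_indicatorPoly_mul {i j : Fin N} (hij : i ≠ j) (ci : Fin (m i)) (cj : Fin (m j))
    (S : Finset ((i : Fin N) × Fin (D i))) :
    walshCoeff (fun z => indicatorPoly D m s i ci z * indicatorPoly D m s j cj z) S =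
      if S.image Sigma.fst ⊆ {i, j} then
        ((2 : ℝ) ^ (D i + D j))⁻¹ *
          ((∏ q ∈ registerPart i S, s i ci q) * ∏ q ∈ registerPart j S, s j cj q)
      else 0 := by
  unfold indicatorPoly
  simp only [mul_mul_mul_comm _ (∏ q, _), walshCoeff_const_mul,
    walshCoeff_prod_one_add_mul_mul_prod_one_add_mul hij, pow_add, mul_inv, mul_ite, mul_zero]

variable (α : ∀ i, Fin (m i) → ℝ) (β : ∀ i j, Fin (m i) → Fin (m j) → ℝ)

lemma walshCoeff_encodedF (S : Finset ((i : Fin N) × Fin (D i))) :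
    walshCoeff (encodedF D m s α β) S =
      (∑ a, if S.image Sigma.fst ⊆ {a} then
        ((2 : ℝ) ^ D a)⁻¹ * ∑ c, α a c * ∏ q ∈ registerPart a S, s a c q else 0) +
      ∑ a, ∑ b, if a < b ∧ S.image Sigma.fst ⊆ {a, b} then
        ((2 : ℝ) ^ (D a + D b))⁻¹ * ∑ ci, ∑ cj, β a b ci cj *
          (∏ q ∈ registerPart a S, s a ci q) * ∏ q ∈ registerPart b S, s b cj q else 0 := by
  unfold encodedF
  rw [walshCoeff_add]
  congr 1
  · simp only [walshCoeff_sum, walshCoeff_const_mul, walshCoeff_indicatorPoly]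
    refine sum_congr rfl fun a _ => ?_
    split_ifs <;> simp [mul_sum, mul_left_comm]
  · simp only [walshCoeff_sum, walshCoeff_ite, mul_assoc, walshCoeff_const_mul]
    refine sum_congr rfl fun a _ => sum_congr rfl fun b _ => ?_
    by_cases hab : a < b
    · simp only [walshCoeff_indicatorPoly_mul D m s hab.ne, hab, true_and, if_true]
      split_ifs <;> simp [mul_sum, mul_left_comm]
    · simp [hab]

lemma walshCoeff_encodedF_of_centered
    (hrow : ∀ i j, i < j → ∀ ci : Fin (m i), ∑ cj : Fin (m j), β i j ci cj = 0)
    (hcol : ∀ i j, i < j → ∀ cj : Fin (m j), ∑ ci : Fin (m i), β i j ci cj = 0)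
    (S : Finset ((i : Fin N) × Fin (D i))) :
    walshCoeff (encodedF D m s α β) S =
      (∑ a, if S.image Sigma.fst ⊆ {a} then
        ((2 : ℝ) ^ D a)⁻¹ * ∑ c, α a c * ∏ q ∈ registerPart a S, s a c q else 0) +
      ∑ a, ∑ b, if a < b ∧ S.image Sigma.fst = {a, b} then
        ((2 : ℝ) ^ (D a + D b))⁻¹ * ∑ ci, ∑ cj, β a b ci cj *
          (∏ q ∈ registerPart a S, s a ci q) * ∏ q ∈ registerPart b S, s b cj q else 0 := by
  rw [walshCoeff_encodedF]
  congr 1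
  refine sum_congr rfl fun a _ => sum_congr rfl fun b _ => ?_
  by_cases hS : a < b ∧ S.image Sigma.fst = {a, b}
  · rw [if_pos hS, if_pos ⟨hS.1, hS.2.le⟩]
  rw [if_neg hS]
  split_ifs with hsub
  · refine mul_eq_zero_of_right _
      (sum_sum_mul_prod_mul_prod_eq_zero (hrow a b hsub.1) (hcol a b hsub.1) _ _ ?_)
    simp only [registerPart_eq_empty_iff]
    by_contra! hab
    exact hS ⟨hsub.1,
      subset_antisymm hsub.2 (insert_subset hab.1 (singleton_subset_iff.mpr hab.2))⟩
  · rfl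

end EncodedF

lemma pair_eq_pair_iff_of_lt {α : Type*} [LinearOrder α] {a b c d : α} (hab : a < b)
    (hcd : c < d) : ({a, b} : Finset α) = {c, d} ↔ a = c ∧ b = d := by
  rw [← coe_inj, coe_pair, coe_pair, Set.pair_eq_pair_iff]
  refine ⟨?_, Or.inl⟩
  rintro (h | ⟨rfl, rfl⟩)
  · exact h
  · exact absurd hcd (not_lt.mpr hab.le)

theorem stmt16_general {N : ℕ} (D m : Fin N → ℕ)
    (s : ∀ i, Fin (m i) → Fin (D i) → ℝ)
    (α : ∀ i, Fin (m i) → ℝ) (β : ∀ i j, Fin (m i) → Fin (m j) → ℝ)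
    (hrow : ∀ i j, i < j → ∀ ci : Fin (m i), ∑ cj : Fin (m j), β i j ci cj = 0)
    (hcol : ∀ i j, i < j → ∀ cj : Fin (m j), ∑ ci : Fin (m i), β i j ci cj = 0) :
    (∀ (i : Fin N) (T : Finset (Fin (D i))), T.Nonempty →
      walshCoeff (encodedF D m s α β)
          (T.image (fun q => (⟨i, q⟩ : (i : Fin N) × Fin (D i)))) =
        ((2 : ℝ) ^ D i)⁻¹ * ∑ c : Fin (m i), α i c * ∏ q ∈ T, s i c q) ∧
    (∀ i j, i < j → ∀ (Ti : Finset (Fin (D i))) (Tj : Finset (Fin (D j))),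
      Ti.Nonempty → Tj.Nonempty →
      walshCoeff (encodedF D m s α β)
          (Ti.image (fun q => (⟨i, q⟩ : (i : Fin N) × Fin (D i))) ∪
            Tj.image (fun q => (⟨j, q⟩ : (i : Fin N) × Fin (D i)))) =
        ((2 : ℝ) ^ (D i + D j))⁻¹ *
          ∑ ci : Fin (m i), ∑ cj : Fin (m j),
            β i j ci cj * (∏ q ∈ Ti, s i ci q) * ∏ q ∈ Tj, s j cj q) ∧
    (∀ S : Finset ((i : Fin N) × Fin (D i)), 3 ≤ (S.image Sigma.fst).card →
      walshCoeff (encodedF D m s α β) S = 0) := by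
  refine ⟨fun i T hT => ?_, fun i j hij Ti Tj hTi hTj => ?_, fun S hS => ?_⟩
  · have hpair : ∀ a b : Fin N, ¬(a < b ∧ ({i} : Finset (Fin N)) = {a, b}) :=
      fun a b ⟨hab, h⟩ => by simpa [card_pair hab.ne] using congrArg card h
    rw [walshCoeff_encodedF_of_centered D m s α β hrow hcol,
      image_fst_image_mk (κ := fun i => Fin (D i)) hT]
    simp [hpair]
  · have hsingle : ∀ a : Fin N, ¬({i, j} : Finset (Fin N)) ⊆ {a} := fun a h => by
      simpa [hij.ne] using card_le_card h
    have hpair : ∀ a b : Fin N, (a < b ∧ ({i, j} : Finset (Fin N)) = {a, b}) ↔ (i = a ∧ j = b) :=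
      fun a b => ⟨fun ⟨hab, h⟩ => (pair_eq_pair_iff_of_lt hij hab).mp h,
        by rintro ⟨rfl, rfl⟩; exact ⟨hij, rfl⟩⟩
    rw [walshCoeff_encodedF_of_centered D m s α β hrow hcol, image_union,
      image_fst_image_mk (κ := fun i => Fin (D i)) hTi,
      image_fst_image_mk (κ := fun i => Fin (D i)) hTj, ← insert_eq]
    simp [hsingle, hpair, ite_and, registerPart_union, registerPart_image_mk_of_ne hij.ne,
      registerPart_image_mk_of_ne hij.ne']
  · have hsingle : ∀ a, ¬S.image Sigma.fst ⊆ {a} := fun a h => by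
      have := (card_le_card h).trans_eq (card_singleton a)
      omega
    have hpair : ∀ a b, ¬(a < b ∧ S.image Sigma.fst = {a, b}) := fun a b ⟨_, h⟩ => by
      have := (congrArg card h).trans_le card_le_two
      omega
    rw [walshCoeff_encodedF_of_centered D m s α β hrow hcol]
    simp [hsingle, hpair]

/-- Cost-table form of the encoded couplings: under the centered normalization of the
pairwise tables, for every nonempty `S`: (1) if `S` lies in register `i`, the Walsh
coefficient of `f` at `S` is `2^{−D_i} ∑_c α_i(c) ∏_{q∈S} s^{(i,c)}_q`; (2) if
`S = T_i ⊔ T_j` with `T_i, T_j` nonempty subsets of registers `i < j`, it is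
`2^{−(D_i+D_j)} ∑_{c_i,c_j} β_{i,j}(c_i,c_j) (∏_{q∈T_i} s^{(i,c_i)}_q)(∏_{q∈T_j} s^{(j,c_j)}_q)`;
(3) if `S` intersects three or more registers, it is `0`. -/
theorem stmt16 {N : ℕ} (D m : Fin N → ℕ) (hm : ∀ i, m i ≤ 2 ^ D i)
    (s : ∀ i, Fin (m i) → Fin (D i) → ℝ)
    (hs : ∀ i c q, s i c q = 1 ∨ s i c q = -1)
    (hinj : ∀ i, Function.Injective (s i))
    (α : ∀ i, Fin (m i) → ℝ) (β : ∀ i j, Fin (m i) → Fin (m j) → ℝ)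
    (hrow : ∀ i j, i < j → ∀ ci : Fin (m i), ∑ cj : Fin (m j), β i j ci cj = 0)
    (hcol : ∀ i j, i < j → ∀ cj : Fin (m j), ∑ ci : Fin (m i), β i j ci cj = 0) :
    (∀ (i : Fin N) (T : Finset (Fin (D i))), T.Nonempty →
      walshCoeff (encodedF D m s α β)
          (T.image (fun q => (⟨i, q⟩ : (i : Fin N) × Fin (D i)))) =
        ((2 : ℝ) ^ D i)⁻¹ * ∑ c : Fin (m i), α i c * ∏ q ∈ T, s i c q) ∧
    (∀ i j, i < j → ∀ (Ti : Finset (Fin (D i))) (Tj : Finset (Fin (D j))),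
      Ti.Nonempty → Tj.Nonempty →
      walshCoeff (encodedF D m s α β)
          (Ti.image (fun q => (⟨i, q⟩ : (i : Fin N) × Fin (D i))) ∪
            Tj.image (fun q => (⟨j, q⟩ : (i : Fin N) × Fin (D i)))) =
        ((2 : ℝ) ^ (D i + D j))⁻¹ *
          ∑ ci : Fin (m i), ∑ cj : Fin (m j),
            β i j ci cj * (∏ q ∈ Ti, s i ci q) * ∏ q ∈ Tj, s j cj q) ∧
    (∀ S : Finset ((i : Fin N) × Fin (D i)), 3 ≤ (S.image Sigma.fst).card →
      walshCoeff (encodedF D m s α β) S = 0) :=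
  stmt16_general D m s α β hrow hcol
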